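/- arXiv:1108.2403 — 2 statements merged into one kernel-verified Lean document; each statement's English description precedes it below -/
import Mathlib

section
/- Every finite extension of a finitely L-presented group is finitely L-presented: if a group K has a normal subgroup G of finite index such that G is finitely L-presented, then K is finitely L-presented. -/
/-!
Let `θ : FreeGroup X → K` map onto `G` with kernel `N = lpresKernel Q R Φ`. Adjoin one generator
`t_y` for each coset of `G`, sent to a coset representative. Modulo the finitely many relators
expressing the products `t_y t_z` and the conjugates `t_y^{±1} x t_y^{∓1}` through the image of
`FreeGroup X`, that image becomes normal and the quotient by it is the image of `K ⧸ G`; so every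
element has the form `w t_y`, and the kernel of `FreeGroup (X ⊕ Y) → K` is normally generated by
`N` and these relators. Extending each `σ ∈ Φ` by the identity on the `t_y` turns this into a
finite `L`-presentation of `K`.
-/

/-- The kernel of a finite `L`-presentation: the normal closure in the free group of
`Q ∪ ⋃_{σ ∈ Φ*} σ(R)`, where `Φ*` is the submonoid of `End(F)` generated by `Φ`. -/
def lpresKernel {X : Type} (Q R : Set (FreeGroup X))
    (Φ : Set (Monoid.End (FreeGroup X))) : Subgroup (FreeGroup X) :=
  Subgroup.normalClosure (Q ∪ ⋃ σ ∈ Submonoid.closure Φ, ⇑σ '' R)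

instance lpresKernel_normal {X : Type} (Q R : Set (FreeGroup X))
    (Φ : Set (Monoid.End (FreeGroup X))) : (lpresKernel Q R Φ).Normal :=
  Subgroup.normalClosure_normal

/-- A group is finitely `L`-presented if it is isomorphic to the group presented by a
finite `L`-presentation `(X, Q, Φ, R)`. -/
def IsFinitelyLPresented (G : Type*) [Group G] : Prop :=
  ∃ (n : ℕ) (Q R : Finset (FreeGroup (Fin n)))
    (Φ : Finset (Monoid.End (FreeGroup (Fin n)))),
    Nonempty (G ≃* FreeGroup (Fin n) ⧸ lpresKernel (Q : Set _) (R : Set _) (Φ : Set _))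

/-- A group is invariantly finitely `L`-presented if it admits a finite `L`-presentation
`(X, Q, Φ, R)` such that each `σ ∈ Φ` leaves the kernel `N` invariant. -/
def IsInvariantlyFinitelyLPresented (G : Type*) [Group G] : Prop :=
  ∃ (n : ℕ) (Q R : Finset (FreeGroup (Fin n)))
    (Φ : Finset (Monoid.End (FreeGroup (Fin n)))),
    (∀ σ ∈ Φ, ∀ g ∈ lpresKernel (Q : Set _) (R : Set _) (Φ : Set _),
        σ g ∈ lpresKernel (Q : Set _) (R : Set _) (Φ : Set _)) ∧
    Nonempty (G ≃* FreeGroup (Fin n) ⧸ lpresKernel (Q : Set _) (R : Set _) (Φ : Set _))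

section LPresentation

variable {X Y : Type}

theorem subset_lpresKernel (Q R : Set (FreeGroup X)) (Φ : Set (Monoid.End (FreeGroup X))) :
    Q ⊆ lpresKernel Q R Φ :=
  fun _ hq => Subgroup.subset_normalClosure (Or.inl hq)

theorem apply_mem_lpresKernel {Q R : Set (FreeGroup X)} {Φ : Set (Monoid.End (FreeGroup X))}
    {σ : Monoid.End (FreeGroup X)} (hσ : σ ∈ Submonoid.closure Φ) {r : FreeGroup X}
    (hr : r ∈ R) : σ r ∈ lpresKernel Q R Φ :=
  Subgroup.subset_normalClosure (Or.inr (Set.mem_biUnion hσ (Set.mem_image_of_mem σ hr)))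

theorem lpresKernel_le {Q R : Set (FreeGroup X)} {Φ : Set (Monoid.End (FreeGroup X))}
    {N : Subgroup (FreeGroup X)} [N.Normal] (hQ : Q ⊆ N)
    (hR : ∀ σ ∈ Submonoid.closure Φ, ∀ r ∈ R, σ r ∈ N) : lpresKernel Q R Φ ≤ N :=
  Subgroup.normalClosure_le_normal <| Set.union_subset hQ <|
    Set.iUnion₂_subset fun σ hσ => Set.image_subset_iff.2 fun r hr => hR σ hσ r hr

theorem lpresKernel_image_union (f : FreeGroup X →* FreeGroup Y)
    (e : Monoid.End (FreeGroup X) →* Monoid.End (FreeGroup Y)) (he : ∀ σ w, e σ (f w) = f (σ w))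
    (Q R : Set (FreeGroup X)) (Φ : Set (Monoid.End (FreeGroup X))) (S : Set (FreeGroup Y)) :
    lpresKernel (f '' Q ∪ S) (f '' R) (e '' Φ) =
      Subgroup.normalClosure (f '' lpresKernel Q R Φ ∪ S) := by
  apply le_antisymm
  · refine lpresKernel_le ?_ ?_
    · exact (Set.union_subset_union_left S (Set.image_mono (subset_lpresKernel Q R Φ))).trans
        Subgroup.subset_normalClosure
    · rw [← MonoidHom.map_mclosure]
      rintro _ ⟨σ, hσ, rfl⟩ _ ⟨r, hr, rfl⟩
      rw [he]
      exact Subgroup.subset_normalClosure (Or.inl ⟨σ r, apply_mem_lpresKernel hσ hr, rfl⟩)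
  · refine Subgroup.normalClosure_le_normal (Set.union_subset ?_ ?_)
    · rw [Set.image_subset_iff]
      refine lpresKernel_le (N := (lpresKernel _ _ _).comap f) ?_ ?_
      · exact fun q hq => subset_lpresKernel _ _ _ (Or.inl ⟨q, hq, rfl⟩)
      · intro σ hσ r hr
        rw [Subgroup.mem_comap, ← he]
        exact apply_mem_lpresKernel (MonoidHom.map_mclosure e Φ ▸ ⟨σ, hσ, rfl⟩) ⟨r, hr, rfl⟩
    · exact Set.subset_union_right.trans (subset_lpresKernel _ _ _)

end LPresentation

def Monoid.End.congr {M N : Type*} [Monoid M] [Monoid N] (φ : M ≃* N) :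
    Monoid.End M →* Monoid.End N where
  toFun σ := (φ.toMonoidHom.comp σ).comp φ.symm.toMonoidHom
  map_one' := MonoidHom.ext φ.apply_symm_apply
  map_mul' σ τ := MonoidHom.ext fun x => by
    change φ (σ (τ (φ.symm x))) = φ (σ (φ.symm (φ (τ (φ.symm x)))))
    rw [φ.symm_apply_apply]

theorem Monoid.End.congr_apply_apply {M N : Type*} [Monoid M] [Monoid N] (φ : M ≃* N)
    (σ : Monoid.End M) (x : M) : Monoid.End.congr φ σ (φ x) = φ (σ x) :=
  congrArg (φ ∘ σ) (φ.symm_apply_apply x)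

def FreeGroup.extendEnd {X : Type} (Y : Type) (σ : Monoid.End (FreeGroup X)) :
    Monoid.End (FreeGroup (X ⊕ Y)) :=
  FreeGroup.lift (Sum.elim (fun x => FreeGroup.map Sum.inl (σ (FreeGroup.of x)))
    (fun y => FreeGroup.of (Sum.inr y)))

theorem FreeGroup.extendEnd_of_inl {X Y : Type} (σ : Monoid.End (FreeGroup X)) (x : X) :
    FreeGroup.extendEnd Y σ (FreeGroup.of (Sum.inl x)) =
      FreeGroup.map Sum.inl (σ (FreeGroup.of x)) :=
  FreeGroup.lift_apply_of

theorem FreeGroup.extendEnd_map_inl {X Y : Type} (σ : Monoid.End (FreeGroup X))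
    (w : FreeGroup X) :
    FreeGroup.extendEnd Y σ (FreeGroup.map Sum.inl w) = FreeGroup.map Sum.inl (σ w) := by
  have h : (FreeGroup.extendEnd Y σ : FreeGroup (X ⊕ Y) →* _).comp (FreeGroup.map Sum.inl) =
      (FreeGroup.map Sum.inl).comp (σ : FreeGroup X →* _) :=
    FreeGroup.ext_hom _ _ fun x => FreeGroup.extendEnd_of_inl σ x
  exact DFunLike.congr_fun h w

def FreeGroup.extendEndHom {X : Type} (Y : Type) :
    Monoid.End (FreeGroup X) →* Monoid.End (FreeGroup (X ⊕ Y)) where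
  toFun := FreeGroup.extendEnd Y
  map_one' := by apply FreeGroup.ext_hom; rintro (x | y) <;> rfl
  map_mul' σ τ := by
    refine FreeGroup.ext_hom (FreeGroup.extendEnd Y (σ * τ))
      (FreeGroup.extendEnd Y σ * FreeGroup.extendEnd Y τ) ?_
    rintro (x | y)
    · change FreeGroup.extendEnd Y (σ * τ) (FreeGroup.of (Sum.inl x)) =
        FreeGroup.extendEnd Y σ (FreeGroup.extendEnd Y τ (FreeGroup.of (Sum.inl x)))
      rw [FreeGroup.extendEnd_of_inl, FreeGroup.extendEnd_of_inl, FreeGroup.extendEnd_map_inl,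
        Monoid.End.coe_mul, Function.comp_apply]
    · rfl

theorem IsFinitelyLPresented.of_mulEquiv {H K : Type*} [Group H] [Group K] (e : H ≃* K)
    (hK : IsFinitelyLPresented K) : IsFinitelyLPresented H :=
  let ⟨n, Q, R, Φ, ⟨f⟩⟩ := hK
  ⟨n, Q, R, Φ, ⟨e.trans f⟩⟩

theorem isFinitelyLPresented_quotient_lpresKernel {X : Type} [Finite X] {Q R : Set (FreeGroup X)}
    {Φ : Set (Monoid.End (FreeGroup X))} (hQ : Q.Finite) (hR : R.Finite) (hΦ : Φ.Finite) :
    IsFinitelyLPresented (FreeGroup X ⧸ lpresKernel Q R Φ) := by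
  obtain ⟨n, ⟨e⟩⟩ := Finite.exists_equiv_fin X
  let φ := FreeGroup.freeGroupCongr e
  have hφ := lpresKernel_image_union φ.toMonoidHom (Monoid.End.congr φ)
    (Monoid.End.congr_apply_apply φ) Q R Φ ∅
  rw [Set.union_empty, Set.union_empty, ← Subgroup.map_normalClosure _ φ.toMonoidHom φ.surjective,
    Subgroup.normalClosure_eq_self] at hφ
  refine ⟨n, (hQ.image φ).toFinset, (hR.image φ).toFinset, (hΦ.image (Monoid.End.congr φ)).toFinset,
    ⟨QuotientGroup.congr _ _ φ ?_⟩⟩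
  simpa using hφ.symm

theorem FreeGroup.range_le_of_forall_of_mem {α P : Type*} [Group P] (f : FreeGroup α →* P)
    {S : Subgroup P} (h : ∀ a, f (FreeGroup.of a) ∈ S) : f.range ≤ S :=
  FreeGroup.lift.apply_symm_apply f ▸ FreeGroup.range_lift_le (Set.range_subset_iff.2 h)

theorem FreeGroup.range_normal_of_conj_of_mem {α β P : Type*} [Group P] (f : FreeGroup α →* P)
    (hf : Function.Surjective f) (g : FreeGroup β →* P)
    (h : ∀ a b, f (FreeGroup.of a) * g (FreeGroup.of b) * (f (FreeGroup.of a))⁻¹ ∈ g.range ∧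
      (f (FreeGroup.of a))⁻¹ * g (FreeGroup.of b) * f (FreeGroup.of a) ∈ g.range) :
    g.range.Normal := by
  suffices conj : ∀ w, ∀ c ∈ g.range, f w * c * (f w)⁻¹ ∈ g.range from
    ⟨fun c hc p => (hf p).elim fun w hw => hw ▸ conj w c hc⟩
  intro w
  induction w using FreeGroup.induction_on with
  | C1 => simp
  | of a =>
    rintro _ ⟨u, rfl⟩
    exact FreeGroup.range_le_of_forall_of_mem
      ((MulAut.conj (f (FreeGroup.of a))).toMonoidHom.comp g) (fun b => (h a b).1) ⟨u, rfl⟩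
  | inv_of a _ =>
    rintro _ ⟨u, rfl⟩
    have := FreeGroup.range_le_of_forall_of_mem (S := g.range)
      ((MulAut.conj (f (FreeGroup.of a))⁻¹).toMonoidHom.comp g) (fun b => by simpa using (h a b).2)
      ⟨u, rfl⟩
    simpa using this
  | mul u v hu hv =>
    intro c hc
    simpa [mul_assoc] using hu _ (hv c hc)

namespace FiniteExtension

variable {K : Type*} [Group K] {G : Subgroup K} {X Y : Type} (θ : FreeGroup X →* K) (ε : Y ≃ K ⧸ G)

noncomputable def extensionHom : FreeGroup (X ⊕ Y) →* K :=
  FreeGroup.lift (Sum.elim (fun x => θ (FreeGroup.of x)) fun y => (ε y).out)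

theorem extensionHom_of_inl (a : X) :
    extensionHom θ ε (FreeGroup.of (Sum.inl a)) = θ (FreeGroup.of a) :=
  FreeGroup.lift_apply_of

theorem extensionHom_of_inr (y : Y) :
    extensionHom θ ε (FreeGroup.of (Sum.inr y)) = (ε y).out :=
  FreeGroup.lift_apply_of

theorem extensionHom_map_inl (w : FreeGroup X) :
    extensionHom θ ε (FreeGroup.map Sum.inl w) = θ w := by
  have h : (extensionHom θ ε).comp (FreeGroup.map Sum.inl) = θ :=
    FreeGroup.ext_hom _ _ fun a => by simp [extensionHom_of_inl]
  exact DFunLike.congr_fun h w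

variable [G.Normal]

variable (X) in
/-- Products and conjugates of the coset generators `t_y` whose images lie in `G`; equating each
with a word in `X` gives the relators added to a presentation of `G`. -/
def extensionWords : Set (FreeGroup (X ⊕ Y)) :=
  let t (y : Y) : FreeGroup (X ⊕ Y) := FreeGroup.of (Sum.inr y)
  let x (a : X) : FreeGroup (X ⊕ Y) := FreeGroup.of (Sum.inl a)
  Set.range (fun yz : Y × Y => t yz.1 * t yz.2 * (t (ε.symm (ε yz.1 * ε yz.2)))⁻¹) ∪
    Set.range (fun ya : Y × X => t ya.1 * x ya.2 * (t ya.1)⁻¹) ∪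
    Set.range (fun ya : Y × X => (t ya.1)⁻¹ * x ya.2 * t ya.1)

noncomputable def extensionRelators : Set (FreeGroup (X ⊕ Y)) :=
  (fun w => w * (FreeGroup.map Sum.inl (Function.invFun θ (extensionHom θ ε w)))⁻¹) ''
    extensionWords X ε

theorem extensionRelators_finite [Finite X] [Finite Y] : (extensionRelators θ ε).Finite :=
  (((Set.finite_range _).union (Set.finite_range _)).union (Set.finite_range _)).image _

theorem extensionHom_mem_of_mem_extensionWords (hθ : θ.range ≤ G)
    {w : FreeGroup (X ⊕ Y)} (hw : w ∈ extensionWords X ε) : extensionHom θ ε w ∈ G := by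
  have hx : ∀ a, θ (FreeGroup.of a) ∈ G := fun a => hθ ⟨_, rfl⟩
  rcases hw with (⟨⟨y, z⟩, rfl⟩ | ⟨⟨y, a⟩, rfl⟩) | ⟨⟨y, a⟩, rfl⟩ <;>
    simp only [map_mul, map_inv, extensionHom_of_inr, extensionHom_of_inl]
  · rw [← QuotientGroup.eq_one_iff]
    simp
  · exact ‹G.Normal›.conj_mem _ (hx a) _
  · simpa using ‹G.Normal›.conj_mem _ (hx a) (ε y).out⁻¹

theorem extensionHom_surjective (hθ : θ.range = G) : Function.Surjective (extensionHom θ ε) := by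
  intro k
  have hk : k * (k : K ⧸ G).out⁻¹ ∈ θ.range := by
    rw [hθ, ← QuotientGroup.eq_one_iff]
    simp
  obtain ⟨u, hu⟩ := hk
  refine ⟨FreeGroup.map Sum.inl u * FreeGroup.of (Sum.inr (ε.symm k)), ?_⟩
  rw [map_mul, extensionHom_map_inl, extensionHom_of_inr, Equiv.apply_symm_apply, hu,
    inv_mul_cancel_right]

theorem normalClosure_le_ker_extensionHom (hθ : θ.range = G) :
    Subgroup.normalClosure (FreeGroup.map Sum.inl '' θ.ker ∪ extensionRelators θ ε) ≤
      (extensionHom θ ε).ker := by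
  refine Subgroup.normalClosure_le_normal (Set.union_subset ?_ ?_)
  · rintro _ ⟨u, hu, rfl⟩
    rwa [SetLike.mem_coe, MonoidHom.mem_ker, extensionHom_map_inl]
  · rintro _ ⟨w, hw, rfl⟩
    have hψw : extensionHom θ ε w ∈ θ.range :=
      hθ ▸ extensionHom_mem_of_mem_extensionWords θ ε hθ.le hw
    rw [SetLike.mem_coe, MonoidHom.mem_ker, map_mul, map_inv, extensionHom_map_inl,
      Function.invFun_eq hψw, mul_inv_cancel]

def inlRange {Y : Type*} (H : Subgroup (FreeGroup (X ⊕ Y))) [H.Normal] :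
    Subgroup (FreeGroup (X ⊕ Y) ⧸ H) :=
  ((QuotientGroup.mk' H).comp (FreeGroup.map Sum.inl)).range

variable {θ ε} {H : Subgroup (FreeGroup (X ⊕ Y))} [H.Normal]

theorem mk_mem_inlRange_of_mem_extensionWords (hrel : extensionRelators θ ε ⊆ H)
    {w : FreeGroup (X ⊕ Y)} (hw : w ∈ extensionWords X ε) :
    QuotientGroup.mk' H w ∈ inlRange H :=
  ⟨Function.invFun θ (extensionHom θ ε w),
    (QuotientGroup.eq_iff_div_mem.2 (by rw [div_eq_mul_inv]; exact hrel ⟨w, hw, rfl⟩)).symm⟩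

theorem inlRange_normal (hrel : extensionRelators θ ε ⊆ H) : (inlRange H).Normal := by
  refine FreeGroup.range_normal_of_conj_of_mem (QuotientGroup.mk' H)
    (QuotientGroup.mk'_surjective H) _ ?_
  rintro (a | y) b
  · have ha : QuotientGroup.mk' H (FreeGroup.of (Sum.inl a)) ∈ inlRange H := ⟨FreeGroup.of a, rfl⟩
    have hb : QuotientGroup.mk' H (FreeGroup.of (Sum.inl b)) ∈ inlRange H := ⟨FreeGroup.of b, rfl⟩
    exact ⟨mul_mem (mul_mem ha hb) (inv_mem ha), mul_mem (mul_mem (inv_mem ha) hb) ha⟩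
  · constructor
    · simpa [inlRange] using
        mk_mem_inlRange_of_mem_extensionWords hrel (Or.inl (Or.inr ⟨(y, b), rfl⟩))
    · simpa [inlRange] using mk_mem_inlRange_of_mem_extensionWords hrel (Or.inr ⟨(y, b), rfl⟩)

/-- The words make `q ↦ t_{ε⁻¹ q}` a homomorphism `τ : K ⧸ G → P ⧸ inlRange H`, where
`P = FreeGroup (X ⊕ Y) ⧸ H`, and the projection onto `P ⧸ inlRange H` factors through `τ`. -/
theorem mk_mem_inlRange_of_extensionHom_mem (hθ : θ.range ≤ G) (hrel : extensionRelators θ ε ⊆ H)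
    {z : FreeGroup (X ⊕ Y)} (hz : extensionHom θ ε z ∈ G) :
    QuotientGroup.mk' H z ∈ inlRange H := by
  have := inlRange_normal hrel
  let π := (QuotientGroup.mk' (inlRange H)).comp (QuotientGroup.mk' H)
  have hπ : ∀ w ∈ extensionWords X ε, π w = 1 := fun w hw =>
    (QuotientGroup.eq_one_iff _).2 (mk_mem_inlRange_of_mem_extensionWords hrel hw)
  let τ : K ⧸ G →* _ ⧸ inlRange H :=
    MonoidHom.mk' (fun q => π (FreeGroup.of (Sum.inr (ε.symm q))))
    fun p q => by
      have h := hπ _ (Or.inl (Or.inl ⟨(ε.symm p, ε.symm q), rfl⟩))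
      simp only [map_mul, map_inv, Equiv.apply_symm_apply] at h
      exact (mul_inv_eq_one.1 h).symm
  have hπτ : π = τ.comp ((QuotientGroup.mk' G).comp (extensionHom θ ε)) := by
    refine FreeGroup.ext_hom _ _ ?_
    rintro (a | y)
    · have ha : π (FreeGroup.of (Sum.inl a)) = 1 :=
        (QuotientGroup.eq_one_iff _).2 ⟨FreeGroup.of a, rfl⟩
      have hθa : (θ (FreeGroup.of a) : K ⧸ G) = 1 := (QuotientGroup.eq_one_iff _).2 (hθ ⟨_, rfl⟩)
      simp [ha, extensionHom_of_inl, hθa]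
    · simp [τ, extensionHom_of_inr]
  have hπz : π z = 1 := by
    simp [hπτ, (QuotientGroup.eq_one_iff _).2 hz]
  exact (QuotientGroup.eq_one_iff _).1 hπz

variable (θ ε) in
theorem ker_extensionHom (hθ : θ.range = G) :
    (extensionHom θ ε).ker =
      Subgroup.normalClosure (FreeGroup.map Sum.inl '' θ.ker ∪ extensionRelators θ ε) := by
  set H := Subgroup.normalClosure (FreeGroup.map Sum.inl '' θ.ker ∪ extensionRelators θ ε)
  have hH : H ≤ (extensionHom θ ε).ker := normalClosure_le_ker_extensionHom θ ε hθ
  refine le_antisymm (fun z hz => ?_) hH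
  rw [MonoidHom.mem_ker] at hz
  obtain ⟨u, hu⟩ := mk_mem_inlRange_of_extensionHom_mem hθ.le
    (Set.subset_union_right.trans Subgroup.subset_normalClosure) (hz ▸ one_mem G)
  have hdiv : FreeGroup.map Sum.inl u / z ∈ H := QuotientGroup.eq_iff_div_mem.1 hu
  have hu : u ∈ θ.ker := by
    simpa [hz, extensionHom_map_inl] using hH hdiv
  have hinl : FreeGroup.map Sum.inl u ∈ H := Subgroup.subset_normalClosure (Or.inl ⟨u, hu, rfl⟩)
  simpa using H.mul_mem (H.inv_mem hdiv) hinl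

end FiniteExtension

open FiniteExtension in
theorem isFinitelyLPresented_of_finiteIndex_range {K : Type*} [Group K] {G : Subgroup K}
    [G.Normal] [G.FiniteIndex] {X : Type} [Finite X] (θ : FreeGroup X →* K) (hθ : θ.range = G)
    {Q R : Set (FreeGroup X)} {Φ : Set (Monoid.End (FreeGroup X))} (hQ : Q.Finite)
    (hR : R.Finite) (hΦ : Φ.Finite) (hker : θ.ker = lpresKernel Q R Φ) :
    IsFinitelyLPresented K := by
  let ε := (Finite.equivFin (K ⧸ G)).symm
  have hpres := lpresKernel_image_union (FreeGroup.map Sum.inl)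
    (FreeGroup.extendEndHom (Fin (Nat.card (K ⧸ G)))) FreeGroup.extendEnd_map_inl Q R Φ
    (extensionRelators θ ε)
  rw [← hker, ← ker_extensionHom θ ε hθ] at hpres
  exact .of_mulEquiv ((QuotientGroup.quotientKerEquivOfSurjective _
    (extensionHom_surjective θ ε hθ)).symm.trans (QuotientGroup.quotientMulEquivOfEq hpres.symm))
    (isFinitelyLPresented_quotient_lpresKernel
      ((hQ.image _).union (extensionRelators_finite θ ε)) (hR.image _) (hΦ.image _))

/-- Corollary 2.4: every finite extension of a finitely `L`-presented group is
finitely `L`-presented: if `K` has a normal subgroup `G` of finite index such that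
`G` is finitely `L`-presented, then `K` is finitely `L`-presented. -/
theorem finite_extension_isFinitelyLPresented
    {K : Type*} [Group K] (G : Subgroup K) (hGn : G.Normal)
    (hfi : G.FiniteIndex) (hG : IsFinitelyLPresented G) :
    IsFinitelyLPresented K := by
  obtain ⟨n, Q, R, Φ, ⟨e⟩⟩ := hG
  let θ : FreeGroup (Fin n) →* K := G.subtype.comp (e.symm.toMonoidHom.comp (QuotientGroup.mk' _))
  refine isFinitelyLPresented_of_finiteIndex_range (G := G) θ ?_ Q.finite_toSet R.finite_toSet
    Φ.finite_toSet ?_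
  · rw [MonoidHom.range_comp, MonoidHom.range_eq_top.2, ← MonoidHom.range_eq_map, G.range_subtype]
    exact e.symm.surjective.comp (QuotientGroup.mk'_surjective _)
  · ext w
    simp [θ]
end

section
/- If G and H are finitely L-presented groups, then the free product G * H is finitely L-presented. If moreover both G and H are invariantly finitely L-presented, then G * H is invariantly finitely L-presented. -/
-- `_root_` is needed below because `MulEquiv.Monoid.End` exists.
def MulEquiv.monoidEndCongr {M N : Type*} [Monoid M] [Monoid N] (e : M ≃* N) :
    _root_.Monoid.End M →* _root_.Monoid.End N where
  toFun σ := (e : M →* N).comp ((σ : M →* M).comp (e.symm : N →* M))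
  map_one' := by ext x; exact e.apply_symm_apply x
  map_mul' σ τ := by ext x; exact congrArg (e ∘ σ) (e.symm_apply_apply _).symm

@[simp]
lemma MulEquiv.monoidEndCongr_apply {M N : Type*} [Monoid M] [Monoid N] (e : M ≃* N)
    (σ : _root_.Monoid.End M) (x : N) : e.monoidEndCongr σ x = e (σ (e.symm x)) := rfl

namespace FreeGroup

variable {X Y : Type*}

lemma lift_sumElim_map_inl (σ : Monoid.End (FreeGroup X)) (g : Y → FreeGroup (X ⊕ Y))
    (w : FreeGroup X) :
    lift (Sum.elim (fun x => map Sum.inl (σ (of x))) g) (map Sum.inl w) = map Sum.inl (σ w) :=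
  DFunLike.congr_fun (ext_hom ((lift _).comp (map Sum.inl))
    ((map Sum.inl).comp (σ : FreeGroup X →* FreeGroup X)) fun _ => lift_apply_of) w

lemma lift_sumElim_map_inr (f : X → FreeGroup (X ⊕ Y)) (τ : Monoid.End (FreeGroup Y))
    (w : FreeGroup Y) :
    lift (Sum.elim f fun y => map Sum.inr (τ (of y))) (map Sum.inr w) = map Sum.inr (τ w) :=
  DFunLike.congr_fun (ext_hom ((lift _).comp (map Sum.inr))
    ((map Sum.inr).comp (τ : FreeGroup Y →* FreeGroup Y)) fun _ => lift_apply_of) w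

def sumEnd :
    Monoid.End (FreeGroup X) × Monoid.End (FreeGroup Y) →* Monoid.End (FreeGroup (X ⊕ Y)) where
  toFun p := lift (Sum.elim (fun x => map Sum.inl (p.1 (of x))) fun y => map Sum.inr (p.2 (of y)))
  map_one' := ext_hom _ _ (Sum.rec (fun _ => rfl) (fun _ => rfl))
  map_mul' p q := by
    refine ext_hom _ _ (Sum.rec (fun x => ?_) (fun y => ?_))
    · show _ = lift _ (lift _ (of (Sum.inl x)))
      simp only [lift_apply_of, Sum.elim_inl, lift_sumElim_map_inl]
      rfl
    · show _ = lift _ (lift _ (of (Sum.inr y)))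
      simp only [lift_apply_of, Sum.elim_inr, lift_sumElim_map_inr]
      rfl

@[simp]
lemma sumEnd_map_inl (p : Monoid.End (FreeGroup X) × Monoid.End (FreeGroup Y))
    (w : FreeGroup X) : sumEnd p (map Sum.inl w) = map Sum.inl (p.1 w) :=
  lift_sumElim_map_inl p.1 _ w

@[simp]
lemma sumEnd_map_inr (p : Monoid.End (FreeGroup X) × Monoid.End (FreeGroup Y))
    (w : FreeGroup Y) : sumEnd p (map Sum.inr w) = map Sum.inr (p.2 w) :=
  lift_sumElim_map_inr _ p.2 w

lemma sumEnd_mem_normalClosure {S₁ : Set (FreeGroup X)} {S₂ : Set (FreeGroup Y)}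
    {p : Monoid.End (FreeGroup X) × Monoid.End (FreeGroup Y)}
    (h₁ : ∀ g ∈ Subgroup.normalClosure S₁, p.1 g ∈ Subgroup.normalClosure S₁)
    (h₂ : ∀ g ∈ Subgroup.normalClosure S₂, p.2 g ∈ Subgroup.normalClosure S₂) :
    ∀ g ∈ Subgroup.normalClosure (map Sum.inl '' S₁ ∪ map Sum.inr '' S₂),
      sumEnd p g ∈ Subgroup.normalClosure (map Sum.inl '' S₁ ∪ map Sum.inr '' S₂) := by
  intro g hg
  have himage : sumEnd p '' (map Sum.inl '' S₁ ∪ map Sum.inr '' S₂)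
      ⊆ Subgroup.normalClosure (map Sum.inl '' S₁ ∪ map Sum.inr '' S₂) := by
    rintro _ ⟨_, ⟨s, hs, rfl⟩ | ⟨s, hs, rfl⟩, rfl⟩
    · rw [sumEnd_map_inl]
      exact Subgroup.normalClosure_mono Set.subset_union_left
        (Subgroup.comap_normalClosure_image_ge S₁ _ (h₁ s (Subgroup.subset_normalClosure hs)))
    · rw [sumEnd_map_inr]
      exact Subgroup.normalClosure_mono Set.subset_union_right
        (Subgroup.comap_normalClosure_image_ge S₂ _ (h₂ s (Subgroup.subset_normalClosure hs)))
  exact Subgroup.normalClosure_le_normal himage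
    (Subgroup.comap_normalClosure_image_ge _ (sumEnd p : FreeGroup (X ⊕ Y) →* _) hg)

end FreeGroup

structure LPresentation (X : Type) where
  Q : Set (FreeGroup X)
  R : Set (FreeGroup X)
  Φ : Set (Monoid.End (FreeGroup X))

namespace LPresentation

variable {X Y : Type} (P : LPresentation X)

def relators : Set (FreeGroup X) :=
  P.Q ∪ ⋃ σ ∈ Submonoid.closure P.Φ, ⇑σ '' P.R

abbrev kernel : Subgroup (FreeGroup X) := lpresKernel P.Q P.R P.Φ

lemma kernel_eq_normalClosure : P.kernel = Subgroup.normalClosure P.relators := rfl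

protected def Finite : Prop := P.Q.Finite ∧ P.R.Finite ∧ P.Φ.Finite

def IsInvariant : Prop := ∀ σ ∈ P.Φ, ∀ g ∈ P.kernel, σ g ∈ P.kernel

section map

variable (φ : FreeGroup X ≃* FreeGroup Y)

def map : LPresentation Y := ⟨φ '' P.Q, φ '' P.R, φ.monoidEndCongr '' P.Φ⟩

lemma relators_map : (P.map φ).relators = φ '' P.relators := by
  simp only [relators, map, Set.image_union, Set.image_iUnion₂, ← MonoidHom.map_mclosure]
  congr 1
  ext g
  simp [Submonoid.mem_map]

lemma kernel_map : (P.map φ).kernel = P.kernel.map (φ : FreeGroup X →* FreeGroup Y) := by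
  rw [kernel_eq_normalClosure, kernel_eq_normalClosure, relators_map,
    Subgroup.map_normalClosure _ _ φ.surjective]
  rfl

lemma Finite.map {P : LPresentation X} (hP : P.Finite) : (P.map φ).Finite :=
  ⟨hP.1.image _, hP.2.1.image _, hP.2.2.image _⟩

lemma IsInvariant.map {P : LPresentation X} (hP : P.IsInvariant) : (P.map φ).IsInvariant := by
  rintro _ ⟨σ, hσ, rfl⟩ _ hg
  rw [kernel_map] at hg ⊢
  obtain ⟨g, hg, rfl⟩ := hg
  exact ⟨σ g, hP σ hσ g hg, by simp⟩

def quotientMapEquiv : FreeGroup X ⧸ P.kernel ≃* FreeGroup Y ⧸ (P.map φ).kernel :=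
  QuotientGroup.congr _ _ φ (P.kernel_map φ).symm

end map

section sum

variable (P₁ : LPresentation X) (P₂ : LPresentation Y)

def sum : LPresentation (X ⊕ Y) where
  Q := FreeGroup.map Sum.inl '' P₁.Q ∪ FreeGroup.map Sum.inr '' P₂.Q
  R := FreeGroup.map Sum.inl '' P₁.R ∪ FreeGroup.map Sum.inr '' P₂.R
  Φ := FreeGroup.sumEnd '' (P₁.Φ ×ˢ {1} ∪ {1} ×ˢ P₂.Φ)

lemma closure_sum_Φ :
    Submonoid.closure (P₁.sum P₂).Φ
      = ((Submonoid.closure P₁.Φ).prod (Submonoid.closure P₂.Φ)).map FreeGroup.sumEnd := by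
  rw [sum, ← MonoidHom.map_mclosure, Submonoid.closure_union, Submonoid.closure_prod_one,
    Submonoid.closure_one_prod, Submonoid.prod_bot_sup_bot_prod]

lemma iUnion_sumEnd_image (S₁ : Submonoid (Monoid.End (FreeGroup X)))
    (S₂ : Submonoid (Monoid.End (FreeGroup Y))) (R₁ : Set (FreeGroup X))
    (R₂ : Set (FreeGroup Y)) :
    ⋃ σ ∈ (S₁.prod S₂).map FreeGroup.sumEnd,
        ⇑σ '' (FreeGroup.map Sum.inl '' R₁ ∪ FreeGroup.map Sum.inr '' R₂)
      = FreeGroup.map Sum.inl '' (⋃ ρ ∈ S₁, ⇑ρ '' R₁)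
        ∪ FreeGroup.map Sum.inr '' (⋃ τ ∈ S₂, ⇑τ '' R₂) := by
  ext g
  simp only [Set.mem_iUnion, Set.mem_union, Set.mem_image, Submonoid.mem_map,
    Submonoid.mem_prod, exists_prop, Prod.exists]
  constructor
  · rintro ⟨_, ⟨σ, τ, ⟨hσ, hτ⟩, rfl⟩, _, ⟨r, hr, rfl⟩ | ⟨r, hr, rfl⟩, rfl⟩
    · exact .inl ⟨σ r, ⟨σ, hσ, r, hr, rfl⟩, (FreeGroup.sumEnd_map_inl (σ, τ) r).symm⟩
    · exact .inr ⟨τ r, ⟨τ, hτ, r, hr, rfl⟩, (FreeGroup.sumEnd_map_inr (σ, τ) r).symm⟩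
  · rintro (⟨_, ⟨σ, hσ, r, hr, rfl⟩, rfl⟩ | ⟨_, ⟨τ, hτ, r, hr, rfl⟩, rfl⟩)
    · exact ⟨_, ⟨σ, 1, ⟨hσ, S₂.one_mem⟩, rfl⟩, _, Or.inl ⟨r, hr, rfl⟩,
        FreeGroup.sumEnd_map_inl _ _⟩
    · exact ⟨_, ⟨1, τ, ⟨S₁.one_mem, hτ⟩, rfl⟩, _, Or.inr ⟨r, hr, rfl⟩,
        FreeGroup.sumEnd_map_inr _ _⟩

lemma relators_sum :
    (P₁.sum P₂).relators
      = FreeGroup.map Sum.inl '' P₁.relators ∪ FreeGroup.map Sum.inr '' P₂.relators := by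
  rw [relators, relators, relators, closure_sum_Φ, sum, iUnion_sumEnd_image,
    Set.union_union_union_comm, ← Set.image_union, ← Set.image_union]

variable {P₁ P₂}

lemma Finite.sum (h₁ : P₁.Finite) (h₂ : P₂.Finite) : (P₁.sum P₂).Finite :=
  ⟨(h₁.1.image _).union (h₂.1.image _), (h₁.2.1.image _).union (h₂.2.1.image _),
    ((h₁.2.2.prod (Set.finite_singleton 1)).union
      ((Set.finite_singleton 1).prod h₂.2.2)).image _⟩

lemma IsInvariant.sum (h₁ : P₁.IsInvariant) (h₂ : P₂.IsInvariant) :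
    (P₁.sum P₂).IsInvariant := by
  have hker : (P₁.sum P₂).kernel = Subgroup.normalClosure
      (FreeGroup.map Sum.inl '' P₁.relators ∪ FreeGroup.map Sum.inr '' P₂.relators) := by
    rw [kernel_eq_normalClosure, relators_sum]
  rintro _ ⟨p, ⟨hp₁, hp₂⟩ | ⟨hp₁, hp₂⟩, rfl⟩ <;> rw [hker] <;>
    refine FreeGroup.sumEnd_mem_normalClosure ?_ ?_
  · exact h₁ p.1 hp₁
  · rw [Set.mem_singleton_iff.mp hp₂]; exact fun _ => id
  · rw [Set.mem_singleton_iff.mp hp₁]; exact fun _ => id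
  · exact h₂ p.2 hp₂

variable (P₁ P₂)

def sumQuotientEquiv : FreeGroup (X ⊕ Y) ⧸ (P₁.sum P₂).kernel ≃*
    Monoid.Coprod (FreeGroup X ⧸ P₁.kernel) (FreeGroup Y ⧸ P₂.kernel) :=
  (QuotientGroup.quotientMulEquivOfEq (by rw [kernel_eq_normalClosure, relators_sum])).trans
    (PresentedGroup.coprodPresentations P₁.relators P₂.relators)

end sum

lemma Finite.exists_map_eq_finsets {X : Type} [_root_.Finite X] {P : LPresentation X}
    (hP : P.Finite) : ∃ (n : ℕ) (φ : FreeGroup X ≃* FreeGroup (Fin n))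
      (Q R : Finset (FreeGroup (Fin n))) (Φ : Finset (Monoid.End (FreeGroup (Fin n)))),
      P.map φ = ⟨Q, R, Φ⟩ := by
  obtain ⟨n, ⟨e⟩⟩ := _root_.Finite.exists_equiv_fin X
  have hP' := hP.map (FreeGroup.freeGroupCongr e)
  exact ⟨n, FreeGroup.freeGroupCongr e, hP'.1.toFinset, hP'.2.1.toFinset, hP'.2.2.toFinset,
    by simp only [Set.Finite.coe_toFinset]⟩

end LPresentation

theorem isFinitelyLPresented_iff {G : Type*} [Group G] :
    IsFinitelyLPresented G ↔ ∃ (X : Type) (_ : Finite X) (P : LPresentation X),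
      P.Finite ∧ Nonempty (G ≃* FreeGroup X ⧸ P.kernel) := by
  constructor
  · rintro ⟨n, Q, R, Φ, e⟩
    exact ⟨Fin n, inferInstance, ⟨Q, R, Φ⟩,
      ⟨Q.finite_toSet, R.finite_toSet, Φ.finite_toSet⟩, e⟩
  · rintro ⟨X, _, P, hP, ⟨e⟩⟩
    obtain ⟨n, φ, Q, R, Φ, hφ⟩ := hP.exists_map_eq_finsets
    have e' := P.quotientMapEquiv φ
    rw [hφ] at e'
    exact ⟨n, Q, R, Φ, ⟨e.trans e'⟩⟩

theorem isInvariantlyFinitelyLPresented_iff {G : Type*} [Group G] :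
    IsInvariantlyFinitelyLPresented G ↔ ∃ (X : Type) (_ : Finite X) (P : LPresentation X),
      P.Finite ∧ P.IsInvariant ∧ Nonempty (G ≃* FreeGroup X ⧸ P.kernel) := by
  constructor
  · rintro ⟨n, Q, R, Φ, hinv, e⟩
    exact ⟨Fin n, inferInstance, ⟨Q, R, Φ⟩,
      ⟨Q.finite_toSet, R.finite_toSet, Φ.finite_toSet⟩, hinv, e⟩
  · rintro ⟨X, _, P, hP, hinv, ⟨e⟩⟩
    obtain ⟨n, φ, Q, R, Φ, hφ⟩ := hP.exists_map_eq_finsets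
    have e' := P.quotientMapEquiv φ
    have hinv' := hinv.map φ
    rw [hφ] at e' hinv'
    exact ⟨n, Q, R, Φ, hinv', ⟨e.trans e'⟩⟩

/-- Proposition 2.5: the free product of two finitely `L`-presented groups is
finitely `L`-presented; if both factors are invariantly finitely `L`-presented,
then so is their free product. -/
theorem freeProduct_isFinitelyLPresented
    {G H : Type*} [Group G] [Group H]
    (hG : IsFinitelyLPresented G) (hH : IsFinitelyLPresented H) :
    IsFinitelyLPresented (Monoid.Coprod G H) ∧
      (IsInvariantlyFinitelyLPresented G → IsInvariantlyFinitelyLPresented H →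
        IsInvariantlyFinitelyLPresented (Monoid.Coprod G H)) := by
  refine ⟨?_, fun hG' hH' => ?_⟩
  · obtain ⟨X, _, P₁, hP₁, ⟨e₁⟩⟩ := isFinitelyLPresented_iff.mp hG
    obtain ⟨Y, _, P₂, hP₂, ⟨e₂⟩⟩ := isFinitelyLPresented_iff.mp hH
    exact isFinitelyLPresented_iff.mpr ⟨X ⊕ Y, inferInstance, P₁.sum P₂, hP₁.sum hP₂,
      ⟨(MulEquiv.coprodCongr e₁ e₂).trans (P₁.sumQuotientEquiv P₂).symm⟩⟩
  · obtain ⟨X, _, P₁, hP₁, hinv₁, ⟨e₁⟩⟩ := isInvariantlyFinitelyLPresented_iff.mp hG'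
    obtain ⟨Y, _, P₂, hP₂, hinv₂, ⟨e₂⟩⟩ := isInvariantlyFinitelyLPresented_iff.mp hH'
    exact isInvariantlyFinitelyLPresented_iff.mpr ⟨X ⊕ Y, inferInstance, P₁.sum P₂,
      hP₁.sum hP₂, hinv₁.sum hinv₂,
      ⟨(MulEquiv.coprodCongr e₁ e₂).trans (P₁.sumQuotientEquiv P₂).symm⟩⟩
end
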